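/- arXiv:1212.0674 — 2 statements merged into one kernel-verified Lean document; each statement's English description precedes it below -/
import Mathlib

section
/- Let Q be a nondegenerate diagonal integral quadratic form in an even number m of variables with p ∤ 2·det(Q) for an odd prime p, and k an integer with p ∤ k. Then δ_p(Q,k) = 1 - ((-1)^{m/2}·det(Q) | p)·p^{-m/2}. -/
/-!
Over `𝔽_q` (`q` odd) write `χ` for the quadratic character and `R(c) = q·[c = 0] - 1`.
One variable gives `#{a x² = u} = 1 + χ(a u)`, and a Jacobi sum turns the convolution of two
of these into `#{a x² + b y² = c} = q + χ(-a b) R(c)`. Functions of the shape `A + B R` are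
closed under convolution (`R * R = q R`), so pairing off the variables of a form in `m = 2n`
variables gives `q · #{Q = c} = q^m + χ((-1)^n det Q) q^n R(c)`.

Modulo prime powers, `p ∤ 2k` forces the gradient `2 a_i x_i` of any solution to be nonzero
mod `p`. Hence the lifts `x + p^j t` of a solution mod `p^j` (`j ≥ 1`) that solve the
congruence mod `p^{j+1}` are cut out by one nontrivial linear equation in `t ∈ 𝔽_p^m`: each
solution lifts in exactly `p^{m-1}` ways, and the ratio defining `δ_p(Q, k)` is constant from
`j = 1` on.
-/

open Filter Topology

/-- Number of solutions of the diagonal quadratic congruence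
`a₁x₁² + ⋯ + aₘxₘ² ≡ k (mod p^j)`. -/
noncomputable def densCount (p m : ℕ) (a : Fin m → ℤ) (k : ℤ) (j : ℕ) : ℕ :=
  Nat.card {x : Fin m → ZMod (p ^ j) //
    ∑ i, (a i : ZMod (p ^ j)) * (x i) ^ 2 = (k : ZMod (p ^ j))}

open Finset

lemma Nat.card_add_eq_sum_mul {α β G : Type*} [AddCommGroup G] [Fintype G] [Finite α] [Finite β]
    (f : α → G) (g : β → G) (c : G) :
    Nat.card {xy : α × β // f xy.1 + g xy.2 = c} =
      ∑ u, Nat.card {x // f x = u} * Nat.card {y // g y = c - u} := by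
  classical
  have e : {xy : α × β // f xy.1 + g xy.2 = c} ≃ Σ u, {x // f x = u} × {y // g y = c - u} :=
    { toFun := fun xy => ⟨f xy.1.1, ⟨xy.1.1, rfl⟩, ⟨xy.1.2, eq_sub_of_add_eq' xy.2⟩⟩
      invFun := fun s => ⟨(s.2.1.1, s.2.2.1), by rw [s.2.1.2, s.2.2.2, add_sub_cancel]⟩
      left_inv := fun _ => rfl
      right_inv := fun ⟨u, ⟨x, hx⟩, ⟨y, hy⟩⟩ => by subst hx; rfl }
  rw [Nat.card_congr e, Nat.card_sigma]
  simp only [Nat.card_prod]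

lemma Fintype.sum_comp_sub_left {G M : Type*} [AddCommGroup G] [Fintype G] [AddCommMonoid M]
    (f : G → M) (c : G) : ∑ u, f (c - u) = ∑ u, f u :=
  (Equiv.subLeft c).sum_comp f

section DiagCount

variable {R : Type*} [CommRing R]

noncomputable def diagCount {ι : Type*} [Fintype ι] (a : ι → R) (c : R) : ℕ :=
  Nat.card {x : ι → R // ∑ i, a i * x i ^ 2 = c}

lemma diagCount_fin_add [Fintype R] {m n : ℕ} (a : Fin (m + n) → R) (c : R) :
    diagCount a c = ∑ u, diagCount (fun i => a (Fin.castAdd n i)) u *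
      diagCount (fun i => a (Fin.natAdd m i)) (c - u) := by
  refine (Nat.card_congr ((Fin.appendEquiv m n).symm.subtypeEquiv fun x => ?_)).trans
    (Nat.card_add_eq_sum_mul _ _ c)
  simp [Fin.sum_univ_add]

lemma diagCount_fin_zero (a : Fin 0 → R) (c : R) [Decidable (c = 0)] :
    diagCount a c = if c = 0 then 1 else 0 := by
  split_ifs with hc <;> simp [diagCount, hc, eq_comm (a := (0 : R))]

end DiagCount

section FiniteField

variable {F : Type*} [Field F] [Fintype F] [DecidableEq F]

/-- `∑_{t ≠ 0} ψ(t c)` for any nontrivial additive character `ψ` of `F`. -/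
def ramanujanSum (c : F) : ℤ := (if c = 0 then (Fintype.card F : ℤ) else 0) - 1

lemma sum_ramanujanSum : ∑ u : F, ramanujanSum u = 0 := by
  simp [ramanujanSum, Finset.sum_sub_distrib]

lemma sum_ramanujanSum_mul_sub (c : F) :
    ∑ u : F, ramanujanSum u * ramanujanSum (c - u) = Fintype.card F * ramanujanSum c := by
  simp [ramanujanSum, sub_eq_zero, sub_mul, mul_sub, Finset.sum_sub_distrib, ite_mul]

lemma sum_affine_ramanujanSum_mul (A B C D : ℤ) (c : F) :
    ∑ u : F, (A + B * ramanujanSum u) * (C + D * ramanujanSum (c - u)) =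
      Fintype.card F * (A * C + B * D * ramanujanSum c) := by
  have expand (u : F) : (A + B * ramanujanSum u) * (C + D * ramanujanSum (c - u)) =
      A * C + A * D * ramanujanSum (c - u) + B * C * ramanujanSum u +
        B * D * (ramanujanSum u * ramanujanSum (c - u)) := by ring
  simp_rw [expand, Finset.sum_add_distrib, ← Finset.mul_sum, sum_ramanujanSum_mul_sub,
    Fintype.sum_comp_sub_left, sum_ramanujanSum]
  simp only [sum_const, card_univ, Int.nsmul_eq_mul, mul_zero, add_zero]
  ring

variable (hF : ringChar F ≠ 2)
include hF

lemma sum_quadraticChar_mul (a : F) : ∑ u : F, quadraticChar F (a * u) = 0 := by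
  simp only [map_mul, ← Finset.mul_sum, quadraticChar_sum_zero hF, mul_zero]

lemma sum_quadraticChar_mul_sub (c : F) :
    ∑ u : F, quadraticChar F u * quadraticChar F (c - u) =
      quadraticChar F (-1) * ramanujanSum c := by
  rcases eq_or_ne c 0 with rfl | hc
  · have hsq (u : F) : quadraticChar F u ^ 2 = if u = 0 then 0 else 1 := by
      split_ifs with hu
      · simp [hu]
      · exact quadraticChar_sq_one hu
    have hneg (u : F) : quadraticChar F u * quadraticChar F (0 - u) =
        quadraticChar F (-1) * quadraticChar F u ^ 2 := by
      rw [zero_sub, neg_eq_neg_one_mul, map_mul]; ring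
    simp_rw [hneg, ← Finset.mul_sum, hsq]
    simp [ramanujanSum, Finset.sum_ite, Finset.filter_ne', Nat.cast_sub Fintype.card_pos]
  · have hscale (t : F) : quadraticChar F (c * t) * quadraticChar F (c - c * t) =
        quadraticChar F t * quadraticChar F (1 - t) := by
      rw [← mul_one_sub, map_mul, map_mul]
      linear_combination quadraticChar F t * quadraticChar F (1 - t) * quadraticChar_sq_one hc
    rw [← Fintype.sum_equiv (Equiv.mulLeft₀ c hc) _ _ fun _ => rfl]
    simp only [Equiv.mulLeft₀_apply, hscale]
    have hJ := jacobiSum_nontrivial_inv (quadraticChar_ne_one hF)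
    rw [(quadraticChar_isQuadratic F).inv] at hJ
    rw [ramanujanSum, if_neg hc, ← jacobiSum, hJ]
    ring

lemma diagCount_unique {ι : Type*} [Unique ι] [Fintype ι] (a : ι → F) (ha : a default ≠ 0)
    (u : F) : (diagCount a u : ℤ) = 1 + quadraticChar F (a default * u) := by
  have e : {x : ι → F // ∑ i, a i * x i ^ 2 = u} ≃ {z : F // z ^ 2 = a default * u} :=
    { toFun := fun x => ⟨a default * x.1 default, by
        rw [mul_pow, sq (a default), mul_assoc, ← Fintype.sum_unique (fun i => a i * x.1 i ^ 2),
          x.2]⟩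
      invFun := fun z => ⟨fun _ => (a default)⁻¹ * z.1, by
        rw [Fintype.sum_unique, mul_pow, z.2]; field_simp⟩
      left_inv := fun x => Subtype.ext (funext fun i => by rw [Unique.eq_default i]; field_simp)
      right_inv := fun z => Subtype.ext (by field_simp) }
  rw [diagCount, Nat.card_congr e, ← Set.coe_ofPred, Nat.card_eq_card_toFinset,
    quadraticChar_card_sqrts hF, add_comm]

lemma diagCount_pair (a : Fin 2 → F) (ha : ∀ i, a i ≠ 0) (c : F) :
    (diagCount a c : ℤ) = Fintype.card F + quadraticChar F (-(a 0 * a 1)) * ramanujanSum c := by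
  have expand (u : F) : (1 + quadraticChar F (a 0 * u)) * (1 + quadraticChar F (a 1 * (c - u))) =
      1 + quadraticChar F (a 0 * u) + quadraticChar F (a 1 * (c - u)) +
        quadraticChar F (a 0) * quadraticChar F (a 1) *
          (quadraticChar F u * quadraticChar F (c - u)) := by
    simp only [map_mul]; ring
  rw [diagCount_fin_add (m := 1) (n := 1) a c]
  push_cast
  simp only [diagCount_unique hF (fun i : Fin 1 => a (Fin.castAdd 1 i)) (ha 0),
    diagCount_unique hF (fun i : Fin 1 => a (Fin.natAdd 1 i)) (ha 1)]
  change ∑ u, (1 + quadraticChar F (a 0 * u)) * (1 + quadraticChar F (a 1 * (c - u))) = _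
  simp_rw [expand, Finset.sum_add_distrib, ← Finset.mul_sum, sum_quadraticChar_mul hF,
    Fintype.sum_comp_sub_left (fun u => quadraticChar F (a 1 * u)), sum_quadraticChar_mul hF,
    sum_quadraticChar_mul_sub hF, neg_eq_neg_one_mul (a 0 * a 1), map_mul]
  simp only [sum_const, card_univ, Int.nsmul_eq_mul, mul_one, add_zero]
  ring

theorem card_mul_diagCount_of_even {m : ℕ} (hm : Even m) (a : Fin m → F) (ha : ∀ i, a i ≠ 0)
    (c : F) :
    (Fintype.card F : ℤ) * diagCount a c = (Fintype.card F : ℤ) ^ m +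
      quadraticChar F ((-1) ^ (m / 2) * ∏ i, a i) * (Fintype.card F : ℤ) ^ (m / 2) *
        ramanujanSum c := by
  induction m using Nat.twoStepInduction generalizing c with
  | zero =>
    rw [diagCount_fin_zero]
    simp [ramanujanSum]
  | one => exact absurd hm Nat.not_even_one
  | more m ih _ =>
    have hhalf : (m + 2) / 2 = m / 2 + 1 := by omega
    rw [diagCount_fin_add (n := 2), Nat.cast_sum, Finset.mul_sum]
    simp only [Nat.cast_mul, ← mul_assoc,
      ih (Nat.even_add.mp hm |>.mpr even_two) _ (fun i => ha _),
      diagCount_pair hF _ (fun i => ha _)]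
    set b₀ := a (Fin.natAdd m 0)
    set b₁ := a (Fin.natAdd m 1)
    have hsign : (-1 : F) ^ (m / 2 + 1) * ((∏ i, a (Fin.castAdd 2 i)) * (b₀ * b₁)) =
        (-1) ^ (m / 2) * (∏ i, a (Fin.castAdd 2 i)) * -(b₀ * b₁) := by
      ring
    rw [sum_affine_ramanujanSum_mul, Fin.prod_univ_add, Fin.prod_univ_two, hhalf, hsign,
      map_mul (quadraticChar F) _ (-(b₀ * b₁))]
    ring

end FiniteField

lemma card_dotProduct_eq {F ι : Type*} [Field F] [Fintype F] [Fintype ι]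
    {b : ι → F} (hb : b ≠ 0) (d : F) :
    Nat.card {t : ι → F // b ⬝ᵥ t = d} = Fintype.card F ^ (Fintype.card ι - 1) := by
  classical
  obtain ⟨i₀, hi₀⟩ := Function.ne_iff.mp hb
  let L : (ι → F) →+ F := AddMonoidHom.mk' (b ⬝ᵥ ·) (dotProduct_add b)
  have hsurj (e : F) : e ∈ Set.range L :=
    ⟨Pi.single i₀ (e / b i₀), by simp [L, dotProduct_single, mul_div_cancel₀ _ hi₀]⟩
  have htotal : Fintype.card F ^ Fintype.card ι = Fintype.card F * #{t | L t = d} := by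
    rw [← Fintype.card_fun, ← Finset.card_univ,
      Finset.card_eq_sum_card_fiberwise (f := L) (t := univ) fun _ _ => mem_univ _,
      Finset.sum_congr rfl fun e _ => AddMonoidHom.card_fiber_eq_of_mem_range L (hsurj e) (hsurj d)]
    simp
  rw [Nat.card_eq_fintype_card, Fintype.card_subtype]
  apply Nat.eq_of_mul_eq_mul_left (Fintype.card_pos (α := F))
  rw [← pow_succ', Nat.sub_add_cancel (Fintype.card_pos_iff.mpr ⟨i₀⟩), htotal]
  rfl

section Lifting

variable {p : ℕ} (j : ℕ)

/-- `t ↦ p^j t`, identifying `ZMod p` with the kernel of `ZMod (p^(j+1)) → ZMod (p^j)`. -/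
noncomputable def embedDigit : ZMod p →+ ZMod (p ^ (j + 1)) :=
  ZMod.lift p ⟨(AddMonoidHom.mulLeft ((p : ZMod (p ^ (j + 1))) ^ j)).comp (Int.castAddHom _), by
    show (p : ZMod (p ^ (j + 1))) ^ j * ((p : ℤ) : ZMod (p ^ (j + 1))) = 0
    rw [Int.cast_natCast, ← pow_succ]
    exact_mod_cast ZMod.natCast_self (p ^ (j + 1))⟩

variable {j}

local notation "ρ" => ZMod.castHom (dvd_pow_self p (Nat.succ_ne_zero j)) (ZMod p)
local notation "red" => ZMod.castHom (pow_dvd_pow p (Nat.le_succ j)) (ZMod (p ^ j))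

lemma embedDigit_intCast (n : ℤ) : embedDigit j (n : ZMod p) = (p : ZMod (p ^ (j + 1))) ^ j * n :=
  ZMod.lift_coe _ _ n

lemma mul_embedDigit (x : ZMod (p ^ (j + 1))) (t : ZMod p) :
    x * embedDigit j t = embedDigit j (ρ x * t) := by
  obtain ⟨n, rfl⟩ := ZMod.intCast_surjective x
  obtain ⟨k, rfl⟩ := ZMod.intCast_surjective t
  rw [embedDigit_intCast, map_intCast, ← Int.cast_mul, embedDigit_intCast]
  push_cast
  ring

lemma castHom_embedDigit_of_ne_zero (hj : j ≠ 0) (t : ZMod p) : ρ (embedDigit j t) = 0 := by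
  obtain ⟨n, rfl⟩ := ZMod.intCast_surjective t
  rw [embedDigit_intCast, map_mul, map_pow, map_natCast, ZMod.natCast_self, zero_pow hj, zero_mul]

lemma embedDigit_mul_embedDigit (hj : j ≠ 0) (t s : ZMod p) :
    embedDigit j t * embedDigit j s = 0 := by
  rw [mul_embedDigit, castHom_embedDigit_of_ne_zero hj, zero_mul, map_zero]

lemma castHom_pow_embedDigit (t : ZMod p) : red (embedDigit j t) = 0 := by
  obtain ⟨n, rfl⟩ := ZMod.intCast_surjective t
  rw [embedDigit_intCast, map_mul, map_pow, map_natCast, ← Nat.cast_pow, ZMod.natCast_self,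
    zero_mul]

lemma embedDigit_injective [NeZero p] : Function.Injective (embedDigit (p := p) j) := by
  refine (injective_iff_map_eq_zero _).mpr fun t ht => ?_
  obtain ⟨n, rfl⟩ := ZMod.intCast_surjective t
  rw [embedDigit_intCast, ← Nat.cast_pow, ← Int.cast_natCast, ← Int.cast_mul,
    ZMod.intCast_zmod_eq_zero_iff_dvd, Nat.cast_pow, pow_succ] at ht
  rw [ZMod.intCast_zmod_eq_zero_iff_dvd]
  exact Int.dvd_of_mul_dvd_mul_left (pow_ne_zero _ (by exact_mod_cast NeZero.ne p)) ht

lemma exists_embedDigit_of_castHom_eq_zero {z : ZMod (p ^ (j + 1))} (hz : red z = 0) :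
    ∃ t, embedDigit j t = z := by
  obtain ⟨n, rfl⟩ := ZMod.intCast_surjective z
  rw [map_intCast, ZMod.intCast_zmod_eq_zero_iff_dvd] at hz
  obtain ⟨w, rfl⟩ := hz
  exact ⟨w, by rw [embedDigit_intCast]; push_cast; ring⟩

variable {ι : Type*} [Fintype ι]

lemma sum_mul_add_embedDigit_sq (hj : j ≠ 0) (a x : ι → ZMod (p ^ (j + 1)))
    (t : ι → ZMod p) :
    ∑ i, a i * (x i + embedDigit j (t i)) ^ 2 =
      ∑ i, a i * x i ^ 2 + embedDigit j ((fun i => ρ (2 * a i * x i)) ⬝ᵥ t) := by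
  simp only [dotProduct, map_sum, ← mul_embedDigit, ← Finset.sum_add_distrib]
  refine Finset.sum_congr rfl fun i _ => ?_
  linear_combination a i * embedDigit_mul_embedDigit hj (t i) (t i)

lemma diag_gradient_ne_zero [Fact p.Prime] (hp2 : p ≠ 2) (a x : ι → ZMod (p ^ (j + 1)))
    (h : ρ (∑ i, a i * x i ^ 2) ≠ 0) : (fun i => ρ (2 * a i * x i)) ≠ 0 := by
  intro hb
  have h2 : (2 : ZMod p) ≠ 0 := Ring.two_ne_zero (by rwa [ZMod.ringChar_zmod_n])
  refine h (by
    rw [map_sum]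
    refine Finset.sum_eq_zero fun i _ => ?_
    have hi := congrFun hb i
    rw [mul_assoc, map_mul, map_ofNat, Pi.zero_apply, mul_eq_zero] at hi
    rw [sq, ← mul_assoc, map_mul, hi.resolve_left h2, zero_mul])

omit [Fintype ι] in
lemma bijective_add_embedDigit [NeZero p] (x₀ : ι → ZMod (p ^ (j + 1))) :
    Function.Bijective (fun t : ι → ZMod p =>
      (⟨x₀ + fun i => embedDigit j (t i), by
        ext i; simp only [Pi.add_apply, map_add, castHom_pow_embedDigit, add_zero]⟩ :
        {x : ι → ZMod (p ^ (j + 1)) // (fun i => red (x i)) = fun i => red (x₀ i)})) := by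
  refine ⟨fun t s h => funext fun i => embedDigit_injective (j := j) ?_, fun x => ?_⟩
  · simpa using congrFun (congrArg Subtype.val h) i
  · choose t ht using fun i =>
      exists_embedDigit_of_castHom_eq_zero (z := x.1 i - x₀ i) (by
        rw [map_sub, sub_eq_zero]; exact congrFun x.2 i)
    exact ⟨t, Subtype.ext (funext fun i => by simp only [Pi.add_apply, ht, add_sub_cancel])⟩

lemma card_diag_lifts [Fact p.Prime] (hp2 : p ≠ 2) (hj : j ≠ 0) (a : ι → ZMod (p ^ (j + 1)))
    {c : ZMod (p ^ (j + 1))} (hc : ρ c ≠ 0) (x₀ : ι → ZMod (p ^ (j + 1)))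
    (hx₀ : ∑ i, red (a i) * red (x₀ i) ^ 2 = red c) :
    Nat.card {x : ι → ZMod (p ^ (j + 1)) //
      ∑ i, a i * x i ^ 2 = c ∧ (fun i => red (x i)) = fun i => red (x₀ i)} =
        p ^ (Fintype.card ι - 1) := by
  obtain ⟨e₀, he₀⟩ : ∃ e₀, embedDigit j e₀ = ∑ i, a i * x₀ i ^ 2 - c :=
    exists_embedDigit_of_castHom_eq_zero (by
      simp only [map_sub, map_sum, map_mul, map_pow]; exact sub_eq_zero.mpr hx₀)
  have hb := diag_gradient_ne_zero hp2 a x₀ (by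
    rwa [← sub_add_cancel (∑ i, a i * x₀ i ^ 2) c, ← he₀, map_add,
      castHom_embedDigit_of_ne_zero hj, zero_add])
  have hcond (t : ι → ZMod p) : ∑ i, a i * (x₀ i + embedDigit j (t i)) ^ 2 = c ↔
      (fun i => ρ (2 * a i * x₀ i)) ⬝ᵥ t = -e₀ := by
    rw [sum_mul_add_embedDigit_sq hj, ← sub_eq_zero, add_sub_right_comm, ← he₀, ← map_add,
      map_eq_zero_iff _ embedDigit_injective, add_comm, add_eq_zero_iff_eq_neg]
  have hcard := card_dotProduct_eq hb (-e₀)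
  rw [ZMod.card] at hcard
  rw [← hcard]
  exact Nat.card_congr ((((Equiv.ofBijective _ (bijective_add_embedDigit x₀)).subtypeEquiv
    fun t => (hcond t).symm).trans (Equiv.subtypeSubtypeEquivSubtypeInter _ _)).trans
    (Equiv.subtypeEquivRight fun _ => and_comm)).symm

theorem diagCount_eq_pow_mul_diagCount_castHom [Fact p.Prime] (hp2 : p ≠ 2) (hj : j ≠ 0)
    (a : ι → ZMod (p ^ (j + 1))) {c : ZMod (p ^ (j + 1))} (hc : ρ c ≠ 0) :
    diagCount a c = p ^ (Fintype.card ι - 1) * diagCount (fun i => red (a i)) (red c) := by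
  classical
  have hfiber (y : ι → ZMod (p ^ j)) (hy : ∑ i, red (a i) * y i ^ 2 = red c) :
      #{x : ι → ZMod (p ^ (j + 1)) | ∑ i, a i * x i ^ 2 = c ∧ (fun i => red (x i)) = y} =
        p ^ (Fintype.card ι - 1) := by
    obtain ⟨x₀, rfl⟩ : ∃ x₀ : ι → ZMod (p ^ (j + 1)), (fun i => red (x₀ i)) = y :=
      (ZMod.ringHom_surjective _).comp_left y
    rw [← Fintype.card_subtype, ← Nat.card_eq_fintype_card]
    exact card_diag_lifts hp2 hj a hc x₀ hy
  rw [diagCount, diagCount, Nat.card_eq_fintype_card, Nat.card_eq_fintype_card,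
    Fintype.card_subtype, Fintype.card_subtype,
    card_eq_sum_card_fiberwise (f := fun x i => red (x i))
      (t := {y | ∑ i, red (a i) * y i ^ 2 = red c}) ?_]
  · rw [sum_congr rfl (g := fun _ => p ^ (Fintype.card ι - 1)) fun y hy => by
        rw [filter_filter]; exact hfiber y (mem_filter.mp hy).2,
      sum_const, smul_eq_mul, mul_comm]
  · intro x hx
    simp only [coe_filter, mem_univ, true_and, Set.mem_ofPred_eq] at hx ⊢
    rw [← hx, map_sum]
    simp only [map_mul, map_pow]

end Lifting

section Density

variable {p : ℕ} [Fact p.Prime] {m : ℕ} (a : Fin m → ℤ) (k : ℤ)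

lemma diagCount_ringEquiv {R S ι : Type*} [CommRing R] [CommRing S] [Fintype ι] (e : R ≃+* S)
    (a : ι → R) (c : R) : diagCount (fun i => e (a i)) (e c) = diagCount a c :=
  Nat.card_congr ((Equiv.piCongrRight fun _ => e.toEquiv).subtypeEquiv fun x => by
    simp [← map_pow, ← map_mul, ← map_sum, e.injective.eq_iff]).symm

lemma densCount_one : densCount p m a k 1 = diagCount (fun i => (a i : ZMod p)) (k : ZMod p) := by
  have := diagCount_ringEquiv (ZMod.ringEquivCongr (pow_one p)) (fun i => (a i : ZMod (p ^ 1))) k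
  simp only [map_intCast] at this
  exact this.symm

lemma densCount_succ (hp2 : p ≠ 2) (hk : ¬ (p : ℤ) ∣ k) {j : ℕ} (hj : j ≠ 0) :
    densCount p m a k (j + 1) = p ^ (m - 1) * densCount p m a k j := by
  have hk' : (k : ZMod p) ≠ 0 := by rwa [Ne, ZMod.intCast_zmod_eq_zero_iff_dvd]
  have := diagCount_eq_pow_mul_diagCount_castHom hp2 hj (fun i => (a i : ZMod (p ^ (j + 1))))
    (c := k) (by rwa [map_intCast])
  simp only [map_intCast, Fintype.card_fin] at this
  exact this

lemma densCount_div_pow (hp2 : p ≠ 2) (hk : ¬ (p : ℤ) ∣ k) {j : ℕ} (hj : j ≠ 0) :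
    (densCount p m a k j : ℝ) / (p : ℝ) ^ (j * (m - 1)) =
      (densCount p m a k 1 : ℝ) / (p : ℝ) ^ (m - 1) := by
  induction j, Nat.one_le_iff_ne_zero.mpr hj using Nat.le_induction with
  | base => rw [one_mul]
  | succ j hj ih =>
    have hp : (p : ℝ) ≠ 0 := Nat.cast_ne_zero.mpr (Fact.out : p.Prime).ne_zero
    rw [densCount_succ a k hp2 hk (by omega), ← ih (by omega), Nat.cast_mul, Nat.cast_pow,
      Nat.succ_mul, pow_add]
    field_simp

lemma natCast_mul_densCount_one (hp2 : p ≠ 2) (hm : Even m) (hdet : ¬ (p : ℤ) ∣ 2 * ∏ i, a i)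
    (hk : ¬ (p : ℤ) ∣ k) :
    (p : ℤ) * densCount p m a k 1 =
      p ^ m - legendreSym p ((-1) ^ (m / 2) * ∏ i, a i) * p ^ (m / 2) := by
  have hχ : ringChar (ZMod p) ≠ 2 := by rwa [ZMod.ringChar_zmod_n]
  have ha (i : Fin m) : (a i : ZMod p) ≠ 0 := fun h => hdet (dvd_mul_of_dvd_right
    (((ZMod.intCast_zmod_eq_zero_iff_dvd _ _).mp h).trans (dvd_prod_of_mem a (mem_univ i))) 2)
  have hk' : (k : ZMod p) ≠ 0 := fun h => hk ((ZMod.intCast_zmod_eq_zero_iff_dvd _ _).mp h)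
  have hleg : legendreSym p ((-1) ^ (m / 2) * ∏ i, a i) =
      quadraticChar (ZMod p) ((-1) ^ (m / 2) * ∏ i, (a i : ZMod p)) := by
    simp [legendreSym]
  have hcount := card_mul_diagCount_of_even hχ hm _ ha (k : ZMod p)
  rw [ZMod.card, ramanujanSum, if_neg hk', ← hleg, ← densCount_one] at hcount
  linear_combination hcount

lemma densCount_one_div (hp2 : p ≠ 2) (hm0 : 0 < m) (hm : Even m)
    (hdet : ¬ (p : ℤ) ∣ 2 * ∏ i, a i) (hk : ¬ (p : ℤ) ∣ k) :
    (densCount p m a k 1 : ℝ) / (p : ℝ) ^ (m - 1) =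
      1 - (legendreSym p ((-1) ^ (m / 2) * ∏ i, a i) : ℝ) * (p : ℝ) ^ (-(m : ℝ) / 2) := by
  have hcount := natCast_mul_densCount_one a k hp2 hm hdet hk
  obtain ⟨h, rfl⟩ := even_iff_two_dvd.mp hm
  rw [Nat.mul_div_cancel_left h two_pos] at hcount ⊢
  have hcountℝ : (p : ℝ) * densCount p (2 * h) a k 1 =
      p ^ (2 * h) - (legendreSym p ((-1) ^ h * ∏ i, a i) : ℝ) * p ^ h := by
    exact_mod_cast hcount
  set ε : ℝ := (legendreSym p ((-1) ^ h * ∏ i, a i) : ℝ)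
  have hp : (p : ℝ) ≠ 0 := Nat.cast_ne_zero.mpr (Fact.out : p.Prime).ne_zero
  have hpow : (p : ℝ) ^ (-((2 * h : ℕ) : ℝ) / 2) = ((p : ℝ) ^ h)⁻¹ := by
    rw [Nat.cast_mul, Nat.cast_two, neg_div, mul_div_cancel_left₀ _ two_ne_zero,
      Real.rpow_neg (Nat.cast_nonneg p), Real.rpow_natCast]
  have hsplit : (p : ℝ) ^ (2 * h - 1) * p = p ^ h * p ^ h := by
    rw [← pow_succ, Nat.sub_add_cancel hm0, two_mul, pow_add]
  rw [hpow, div_eq_iff (pow_ne_zero _ hp)]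
  refine mul_left_cancel₀ hp ?_
  calc (p : ℝ) * densCount p (2 * h) a k 1 = p ^ (2 * h) - ε * p ^ h := hcountℝ
    _ = (1 - ε * ((p : ℝ) ^ h)⁻¹) * (p ^ h * p ^ h) := by field_simp; ring
    _ = p * ((1 - ε * ((p : ℝ) ^ h)⁻¹) * p ^ (2 * h - 1)) := by rw [← hsplit]; ring

end Density

theorem stmt2_general (p m : ℕ) [Fact p.Prime] (hp2 : p ≠ 2) (hm0 : 0 < m) (hm : Even m)
    (a : Fin m → ℤ)
    (hdet : ¬ (p : ℤ) ∣ 2 * ∏ i, a i)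
    (k : ℤ) (hk : ¬ (p : ℤ) ∣ k) :
    Tendsto (fun j => (densCount p m a k j : ℝ) / (p : ℝ) ^ (j * (m - 1)))
      atTop
      (𝓝 (1 - (legendreSym p ((-1) ^ (m / 2) * ∏ i, a i) : ℝ) *
        (p : ℝ) ^ (-(m : ℝ) / 2))) := by
  rw [← densCount_one_div a k hp2 hm0 hm hdet hk]
  refine tendsto_const_nhds.congr' (eventually_atTop.mpr ⟨1, fun j hj => ?_⟩)
  exact (densCount_div_pow a k hp2 hk (by omega)).symm

/-- The `p`-local density of a diagonal quadratic form in an even number `m` of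
variables, for an odd prime `p` with `p ∤ 2·det Q` and `p ∤ k`:
`δ_p(Q,k) = 1 - ((-1)^{m/2} det(Q) | p) p^{-m/2}`. -/
theorem stmt2 (p m : ℕ) [Fact p.Prime] (hp2 : p ≠ 2) (hm0 : 0 < m) (hm : Even m)
    (a : Fin m → ℤ) (ha : ∀ i, a i ≠ 0)
    (hdet : ¬ (p : ℤ) ∣ 2 * ∏ i, a i)
    (k : ℤ) (hk : ¬ (p : ℤ) ∣ k) :
    Tendsto (fun j => (densCount p m a k j : ℝ) / (p : ℝ) ^ (j * (m - 1)))
      atTop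
      (𝓝 (1 - (legendreSym p ((-1) ^ (m / 2) * ∏ i, a i) : ℝ) *
        (p : ℝ) ^ (-(m : ℝ) / 2))) :=
  stmt2_general p m hp2 hm0 hm a hdet k hk
end

section
/- Let Q be a Hermitian matrix over F ∈ {ℝ, ℂ} of signature (n,1) and let x, y ∈ F^{n+1} satisfy Q[x] < 0 and Q[y] < 0. Then |Q(x,y)|² ≥ Q[x]·Q[y], i.e. |Q(x,y)| / (|Q[x]|^{1/2}·|Q[y]|^{1/2}) ≥ 1; in particular cosh(d([x],[y])) := |Q(x,y)|/(|Q[x]|^{1/2}|Q[y]|^{1/2}) is well-defined as the hyperbolic cosine of a distance. -/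
/-!
After a change of basis the form is the Minkowski form `⟪a, b⟫ - conj s * t` on `𝕜ⁿ × 𝕜`.
For timelike vectors (`‖a‖ < ‖s‖`, `‖b‖ < ‖t‖`), Cauchy–Schwarz on the space parts and the
reverse triangle inequality give `‖Q(x,y)‖ ≥ ‖s‖‖t‖ - ‖a‖‖b‖ ≥ 0`, and
`(‖s‖‖t‖ - ‖a‖‖b‖)² - (‖s‖² - ‖a‖²)(‖t‖² - ‖b‖²) = (‖s‖‖b‖ - ‖a‖‖t‖)² ≥ 0`.
-/

open Matrix

theorem sq_sub_sq_mul_sq_sub_sq_le_sq (a b s t : ℝ) :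
    (s ^ 2 - a ^ 2) * (t ^ 2 - b ^ 2) ≤ (s * t - a * b) ^ 2 := by
  nlinarith [sq_nonneg (s * b - a * t)]

section Minkowski

variable {𝕜 : Type*} [RCLike 𝕜]

theorem norm_sq_sub_mul_le_norm_inner_sub_sq {E : Type*} [NormedAddCommGroup E]
    [InnerProductSpace 𝕜 E] {a b : E} {s t : 𝕜} (ha : ‖a‖ < ‖s‖) (hb : ‖b‖ < ‖t‖) :
    (‖a‖ ^ 2 - ‖s‖ ^ 2) * (‖b‖ ^ 2 - ‖t‖ ^ 2) ≤ ‖inner 𝕜 a b - star s * t‖ ^ 2 := by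
  have hab : ‖a‖ * ‖b‖ ≤ ‖s‖ * ‖t‖ :=
    mul_le_mul ha.le hb.le (norm_nonneg b) ((norm_nonneg a).trans ha.le)
  have hrev : ‖s‖ * ‖t‖ - ‖a‖ * ‖b‖ ≤ ‖inner 𝕜 a b - star s * t‖ :=
    calc ‖s‖ * ‖t‖ - ‖a‖ * ‖b‖ ≤ ‖star s * t‖ - ‖inner 𝕜 a b‖ := by
          rw [norm_mul, norm_star]; linarith [norm_inner_le_norm (𝕜 := 𝕜) a b]
      _ ≤ ‖inner 𝕜 a b - star s * t‖ := by
          rw [norm_sub_rev]; exact norm_sub_norm_le _ _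
  calc (‖a‖ ^ 2 - ‖s‖ ^ 2) * (‖b‖ ^ 2 - ‖t‖ ^ 2)
      = (‖s‖ ^ 2 - ‖a‖ ^ 2) * (‖t‖ ^ 2 - ‖b‖ ^ 2) := by ring
    _ ≤ (‖s‖ * ‖t‖ - ‖a‖ * ‖b‖) ^ 2 := sq_sub_sq_mul_sq_sub_sq_le_sq _ _ _ _
    _ ≤ ‖inner 𝕜 a b - star s * t‖ ^ 2 := pow_le_pow_left₀ (by linarith) hrev 2

variable (𝕜) in
def minkowskiMatrix (n : ℕ) : Matrix (Fin (n + 1)) (Fin (n + 1)) 𝕜 :=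
  diagonal fun i => if i = Fin.last n then -1 else 1

def spacePart {n : ℕ} (z : Fin (n + 1) → 𝕜) : EuclideanSpace 𝕜 (Fin n) :=
  WithLp.toLp 2 (z ∘ Fin.castSucc)

theorem star_dotProduct_minkowskiMatrix_mulVec {n : ℕ} (z w : Fin (n + 1) → 𝕜) :
    star z ⬝ᵥ minkowskiMatrix 𝕜 n *ᵥ w =
      inner 𝕜 (spacePart z) (spacePart w) - star (z (Fin.last n)) * w (Fin.last n) := by
  simp only [dotProduct, Pi.star_apply, RCLike.star_def, minkowskiMatrix, mulVec_diagonal,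
    mul_comm, mul_ite, mul_neg, mul_one, ite_mul, neg_mul, Fin.sum_univ_castSucc,
    Fin.castSucc_ne_last, ↓reduceIte, spacePart, EuclideanSpace.inner_toLp_toLp,
    Function.comp_apply]
  ring

theorem re_star_dotProduct_minkowskiMatrix_mulVec_self {n : ℕ} (z : Fin (n + 1) → 𝕜) :
    RCLike.re (star z ⬝ᵥ minkowskiMatrix 𝕜 n *ᵥ z) = ‖spacePart z‖ ^ 2 - ‖z (Fin.last n)‖ ^ 2 := by
  rw [star_dotProduct_minkowskiMatrix_mulVec, map_sub, inner_self_eq_norm_sq, RCLike.star_def,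
    RCLike.conj_mul, ← RCLike.ofReal_pow, RCLike.ofReal_re]

end Minkowski

theorem star_dotProduct_mulVec_congr {m R : Type*} [Fintype m] [DecidableEq m] [CommRing R]
    [StarRing R] (g : GL m R) (Q : Matrix m m R) (x y : m → R) :
    star ((↑(g⁻¹) : Matrix m m R) *ᵥ x) ⬝ᵥ
        ((g : Matrix m m R)ᴴ * Q * (g : Matrix m m R)) *ᵥ ((↑(g⁻¹) : Matrix m m R) *ᵥ y) =
      star x ⬝ᵥ Q *ᵥ y := by
  have hg : ∀ v : m → R, (g : Matrix m m R) *ᵥ ((↑(g⁻¹) : Matrix m m R) *ᵥ v) = v := fun v => by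
    rw [mulVec_mulVec, ← Units.val_mul, mul_inv_cancel, Units.val_one, one_mulVec]
  rw [← mulVec_mulVec, ← mulVec_mulVec, hg, dotProduct_mulVec, ← star_mulVec, hg]

theorem one_le_div_sqrt_abs_mul_sqrt_abs {P R S : ℝ} (hPR : 0 < P * R) (hS : 0 ≤ S)
    (h : P * R ≤ S ^ 2) : 1 ≤ S / (√|P| * √|R|) := by
  have hden : √|P| * √|R| = √(P * R) := by
    rw [← Real.sqrt_mul (abs_nonneg P), ← abs_mul, abs_of_pos hPR]
  rw [hden, one_le_div (Real.sqrt_pos.2 hPR)]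
  exact (Real.sqrt_le_left hS).2 h

theorem re_mul_re_le_norm_sq_of_congr_minkowski {𝕜 : Type*} [RCLike 𝕜] {n : ℕ}
    {Q : Matrix (Fin (n + 1)) (Fin (n + 1)) 𝕜} {g : GL (Fin (n + 1)) 𝕜}
    (hg : (g : Matrix (Fin (n + 1)) (Fin (n + 1)) 𝕜)ᴴ * Q * g = minkowskiMatrix 𝕜 n)
    {x y : Fin (n + 1) → 𝕜}
    (hx : RCLike.re (star x ⬝ᵥ Q *ᵥ x) < 0) (hy : RCLike.re (star y ⬝ᵥ Q *ᵥ y) < 0) :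
    RCLike.re (star x ⬝ᵥ Q *ᵥ x) * RCLike.re (star y ⬝ᵥ Q *ᵥ y) ≤ ‖star x ⬝ᵥ Q *ᵥ y‖ ^ 2 := by
  have hform : ∀ z w, star z ⬝ᵥ Q *ᵥ w = star ((↑(g⁻¹) : Matrix _ _ 𝕜) *ᵥ z) ⬝ᵥ
      minkowskiMatrix 𝕜 n *ᵥ ((↑(g⁻¹) : Matrix _ _ 𝕜) *ᵥ w) := fun z w => by
    rw [← hg, star_dotProduct_mulVec_congr]
  rw [hform x x, re_star_dotProduct_minkowskiMatrix_mulVec_self] at hx ⊢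
  rw [hform y y, re_star_dotProduct_minkowskiMatrix_mulVec_self] at hy ⊢
  rw [hform x y, star_dotProduct_minkowskiMatrix_mulVec]
  exact norm_sq_sub_mul_le_norm_inner_sub_sq
    (lt_of_pow_lt_pow_left₀ 2 (norm_nonneg _) (sub_neg.1 hx))
    (lt_of_pow_lt_pow_left₀ 2 (norm_nonneg _) (sub_neg.1 hy))

theorem stmt11_general (𝕜 : Type*) [RCLike 𝕜] (n : ℕ)
    (Q : Matrix (Fin (n + 1)) (Fin (n + 1)) 𝕜)
    (hsig : ∃ g : GL (Fin (n + 1)) 𝕜,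
      (g : Matrix (Fin (n + 1)) (Fin (n + 1)) 𝕜)ᴴ * Q * g =
        Matrix.diagonal (fun i => if i = Fin.last n then (-1 : 𝕜) else 1))
    (x y : Fin (n + 1) → 𝕜)
    (hx : RCLike.re (star x ⬝ᵥ Q.mulVec x) < 0)
    (hy : RCLike.re (star y ⬝ᵥ Q.mulVec y) < 0) :
    RCLike.re (star x ⬝ᵥ Q.mulVec x) * RCLike.re (star y ⬝ᵥ Q.mulVec y) ≤
      ‖star x ⬝ᵥ Q.mulVec y‖ ^ 2 ∧
    1 ≤ ‖star x ⬝ᵥ Q.mulVec y‖ /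
      (Real.sqrt |RCLike.re (star x ⬝ᵥ Q.mulVec x)| *
        Real.sqrt |RCLike.re (star y ⬝ᵥ Q.mulVec y)|) := by
  obtain ⟨g, hg⟩ := hsig
  have key := re_mul_re_le_norm_sq_of_congr_minkowski hg hx hy
  exact ⟨key, one_le_div_sqrt_abs_mul_sqrt_abs (mul_pos_of_neg_of_neg hx hy) (norm_nonneg _) key⟩

/-- Reverse Cauchy–Schwarz on the negative cone of a Hermitian form of signature
`(n,1)` over `F = ℝ` or `ℂ`: if `Q[x] < 0` and `Q[y] < 0` then
`|Q(x,y)|² ≥ Q[x]·Q[y]`, so `cosh d([x],[y]) = |Q(x,y)|/(|Q[x]|^{1/2}|Q[y]|^{1/2}) ≥ 1`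
is well-defined. -/
theorem stmt11 (𝕜 : Type*) [RCLike 𝕜] (n : ℕ)
    (Q : Matrix (Fin (n + 1)) (Fin (n + 1)) 𝕜) (hQ : Qᴴ = Q)
    (hsig : ∃ g : GL (Fin (n + 1)) 𝕜,
      (g : Matrix (Fin (n + 1)) (Fin (n + 1)) 𝕜)ᴴ * Q * g =
        Matrix.diagonal (fun i => if i = Fin.last n then (-1 : 𝕜) else 1))
    (x y : Fin (n + 1) → 𝕜)
    (hx : RCLike.re (star x ⬝ᵥ Q.mulVec x) < 0)
    (hy : RCLike.re (star y ⬝ᵥ Q.mulVec y) < 0) :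
    RCLike.re (star x ⬝ᵥ Q.mulVec x) * RCLike.re (star y ⬝ᵥ Q.mulVec y) ≤
      ‖star x ⬝ᵥ Q.mulVec y‖ ^ 2 ∧
    1 ≤ ‖star x ⬝ᵥ Q.mulVec y‖ /
      (Real.sqrt |RCLike.re (star x ⬝ᵥ Q.mulVec x)| *
        Real.sqrt |RCLike.re (star y ⬝ᵥ Q.mulVec y)|) :=
  stmt11_general 𝕜 n Q hsig x y hx hy
end
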